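/- Suppose that S(A) = {a_n} and S(B) = {b_n} are independent Stanley sequences and k ≥ κ(A). Let A* = {a_0, a_1, ..., a_{2^k − 1}} and define A ⊗_k B = {a_{2^k}·b + a : a ∈ A*, b ∈ B}. Then S(A ⊗_k B) is an independent Stanley sequence and, as a set, S(A ⊗_k B) = {a_{2^k}·b + a : a ∈ A*, b ∈ S(B)}. -/

import Mathlib

/-- A set of integers is 3-free if it contains no 3-term arithmetic progression. -/
def ThreeFreeSet (S : Set ℤ) : Prop :=
  ∀ x ∈ S, ∀ y ∈ S, ∀ z ∈ S, x < y → y < z → x + z ≠ 2 * y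

/-- `a` is the Stanley sequence generated greedily from the finite 3-free set `A`
of nonnegative integers containing 0: `a` first enumerates `A` in increasing order,
and for `n ≥ |A|`, `a n` is the least integer exceeding `a (n-1)` keeping the
set of terms so far 3-free. -/
def IsStanleySeq (A : Finset ℤ) (a : ℕ → ℤ) : Prop :=
  (0 : ℤ) ∈ A ∧ (∀ x ∈ A, 0 ≤ x) ∧ ThreeFreeSet ↑A ∧
  StrictMono a ∧ (∀ i < A.card, a i ∈ A) ∧
  ∀ n, A.card ≤ n →
    IsLeast {m : ℤ | a (n - 1) < m ∧ ThreeFreeSet (a '' Set.Iio n ∪ {m})} (a n)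

/-- The two defining conditions of an independent Stanley sequence,
for a given λ and κ. -/
def IndepParams (a : ℕ → ℤ) (lam : ℤ) (κ : ℕ) : Prop :=
  ∀ k, κ ≤ k →
    (∀ i < 2 ^ k, a (2 ^ k + i) = a (2 ^ k) + a i) ∧
    a (2 ^ k) = 2 * a (2 ^ k - 1) + 1 - lam

/-- A Stanley sequence is independent if `IndepParams` holds for some λ and κ. -/
def Independent (a : ℕ → ℤ) : Prop := ∃ lam κ, IndepParams a lam κ

/-- κ(A): the minimal κ witnessing independence. -/
noncomputable def kappa (a : ℕ → ℤ) : ℕ := sInf {κ | ∃ lam, IndepParams a lam κ}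

/-- λ(A), recovered from the defining equation at k = κ(A). -/
noncomputable def lambdaA (a : ℕ → ℤ) : ℤ :=
  2 * a (2 ^ kappa a - 1) + 1 - a (2 ^ kappa a)

/-- The repeat factor ρ(A) = a_{2^{κ(A)}}. -/
noncomputable def rho (a : ℕ → ℤ) : ℤ := a (2 ^ kappa a)

/-- The scaling factor α(A), satisfying a_{2^k} = α·3^k for all k ≥ κ(A). -/
noncomputable def scalingFactor (a : ℕ → ℤ) : ℚ :=
  (a (2 ^ kappa a) : ℚ) / 3 ^ kappa a

/-- An integer `x` is covered by a set `S` if there are `y < z < x` in `S`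
with `y, z, x` in arithmetic progression. -/
def Covers (S : Set ℤ) (x : ℤ) : Prop :=
  ∃ y z, y ∈ S ∧ z ∈ S ∧ y < z ∧ z < x ∧ 2 * z = y + x

/-- An integer `x` is jointly covered by `S` and `T` if there are `y < z < x`
with `y ∈ S`, `z ∈ T`, and `y, z, x` in arithmetic progression. -/
def JointlyCovers (S T : Set ℤ) (x : ℤ) : Prop :=
  ∃ y z, y ∈ S ∧ z ∈ T ∧ y < z ∧ z < x ∧ 2 * z = y + x

/-- O(A): nonnegative integers neither in the Stanley sequence nor covered by it. -/
def OSet (a : ℕ → ℤ) : Set ℤ :=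
  {x | 0 ≤ x ∧ x ∉ Set.range a ∧ ¬ Covers (Set.range a) x}

/-- ω(A): the maximum element of O(A). -/
noncomputable def omegaA (a : ℕ → ℤ) : ℤ := sSup (OSet a)

/-- The translate `S + t` of a set of integers. -/
def shift (S : Set ℤ) (t : ℤ) : Set ℤ := (· + t) '' S

/-- A triadic number: a rational whose denominator in lowest terms is a power of 3. -/
def IsTriadic (q : ℚ) : Prop := ∃ j : ℕ, q.den = 3 ^ j

/-!
Read in base `ρ = a (2 ^ k)`, the terms of `S(A ⊗_k B)` are the numbers `ρ * β + x` with upper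
digit `β ∈ S(B)` and lower digit `x ∈ A* ⊆ [0, ρ)`. A 3-term progression among them carries at most
once between the digits, and a carry gives a progression in `A* ∪ (A* + ρ)`, an initial segment of
`S(A)`; so the set is 3-free. It is greedy because every skipped number `ρ * c + w` is covered:
the lower digit `w < ρ` lies in `A*`, is covered by `A*`, or else `ρ + w` is covered by `A*` (seen
at a level `K ≫ k` where the greedy property of `S(A)` applies, then carried down to `k` by
independence), and then one borrows from the upper digit `c`, which lies in or is covered by
`S(B)`. Independence is inherited digitwise, with `λ = λ(A) + ρ * λ(B)`.
-/

open Set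

lemma ThreeFreeSet.mono {S T : Set ℤ} (hT : ThreeFreeSet T) (h : S ⊆ T) : ThreeFreeSet S :=
  fun x hx y hy z hz => hT x (h hx) y (h hy) z (h hz)

lemma threeFreeSet_iff {S : Set ℤ} :
    ThreeFreeSet S ↔ ∀ x ∈ S, ∀ y ∈ S, ∀ z ∈ S, x + z = 2 * y → x = y := by
  refine ⟨fun hS x hx y hy z hz h => ?_,
    fun hS x hx y hy z hz hxy _ h => hxy.ne (hS x hx y hy z hz h)⟩
  by_contra hne
  rcases lt_or_gt_of_ne hne with hxy | hxy
  · exact hS x hx y hy z hz hxy (by omega) h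
  · exact hS z hz y hy x hx (by omega) hxy (by omega)

lemma covers_of_lt {S : Set ℤ} {x y z : ℤ} (hy : y ∈ S) (hz : z ∈ S) (hyz : y < z)
    (h : 2 * z = y + x) : Covers S x :=
  ⟨y, z, hy, hz, hyz, by omega, h⟩

lemma Covers.of_forall_lt {S T : Set ℤ} {x : ℤ} (h : Covers S x) (hST : ∀ y ∈ S, y < x → y ∈ T) :
    Covers T x := by
  obtain ⟨y, z, hy, hz, hyz, hzx, h⟩ := h
  exact ⟨y, z, hST y hy (by omega), hST z hz hzx, hyz, hzx, h⟩

lemma Covers.not_threeFreeSet {S : Set ℤ} {x : ℤ} (h : Covers S x) (hx : x ∈ S) :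
    ¬ThreeFreeSet S := by
  obtain ⟨y, z, hy, hz, hyz, hzx, h⟩ := h
  exact fun hS => hS y hy z hz x hx hyz hzx (by omega)

lemma covers_of_not_threeFreeSet_union {S : Set ℤ} {v : ℤ} (hS : ThreeFreeSet S)
    (hlt : ∀ y ∈ S, y < v) (h : ¬ThreeFreeSet (S ∪ {v})) : Covers S v := by
  simp only [ThreeFreeSet, not_forall, not_not, exists_prop] at h
  obtain ⟨x, hx, y, hy, z, hz, hxy, hyz, h⟩ := h
  have mem_of_lt : ∀ u ∈ S ∪ {v}, u < v → u ∈ S := by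
    rintro u (hu | rfl) huv
    · exact hu
    · exact absurd huv (lt_irrefl u)
  rcases hz with hz | rfl
  · exact absurd h (hS x (mem_of_lt x hx (by linarith [hlt z hz])) y
      (mem_of_lt y hy (by linarith [hlt z hz])) z hz hxy hyz)
  · exact covers_of_lt (mem_of_lt x hx (by omega)) (mem_of_lt y hy hyz) hxy (by omega)

def blockSum (ρ : ℤ) (T P : Set ℤ) : Set ℤ := image2 (fun β x => ρ * β + x) T P

section Blocks

variable {ρ : ℤ} {T P : Set ℤ}

lemma mul_add_mem_blockSum {β x : ℤ} (hβ : β ∈ T) (hx : x ∈ P) : ρ * β + x ∈ blockSum ρ T P :=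
  mem_image2_of_mem hβ hx

lemma mul_add_lt_mul_add {β₁ β₂ x₁ x₂ : ℤ} (hx₁ : x₁ ∈ Ico 0 ρ) (hx₂ : 0 ≤ x₂) (hβ : β₁ < β₂) :
    ρ * β₁ + x₁ < ρ * β₂ + x₂ := by
  obtain ⟨h₀, h₁⟩ := hx₁
  nlinarith [mul_le_mul_of_nonneg_left (show β₁ + 1 ≤ β₂ by omega) (h₀.trans h₁.le)]

lemma threeFreeSet_blockSum (hP : P ⊆ Ico 0 ρ) (hPρ : ThreeFreeSet (P ∪ shift P ρ))
    (hT : ThreeFreeSet T) : ThreeFreeSet (blockSum ρ T P) := by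
  rw [threeFreeSet_iff] at hPρ hT ⊢
  rintro _ ⟨β₁, hβ₁, x₁, hx₁, rfl⟩ _ ⟨β₂, hβ₂, x₂, hx₂, rfl⟩ _ ⟨β₃, hβ₃, x₃, hx₃, rfl⟩ h
  dsimp only at h ⊢
  obtain ⟨h₁, h₁'⟩ := hP hx₁
  obtain ⟨h₂, h₂'⟩ := hP hx₂
  obtain ⟨h₃, h₃'⟩ := hP hx₃
  have hcarry : ρ * (β₁ + β₃ - 2 * β₂) = 2 * x₂ - x₁ - x₃ := by linear_combination h
  have hd₁ : β₁ + β₃ - 2 * β₂ < 2 := by nlinarith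
  have hd₂ : -2 < β₁ + β₃ - 2 * β₂ := by nlinarith
  have mem_shift : ∀ {x}, x ∈ P → x + ρ ∈ P ∪ shift P ρ := fun hx => Or.inr ⟨_, hx, rfl⟩
  rcases (by omega : β₁ + β₃ - 2 * β₂ = -1 ∨ β₁ + β₃ - 2 * β₂ = 0 ∨ β₁ + β₃ - 2 * β₂ = 1)
    with hd | hd | hd <;> rw [hd] at hcarry
  · have := hPρ x₃ (Or.inl hx₃) (x₂ + ρ) (mem_shift hx₂) (x₁ + ρ) (mem_shift hx₁) (by linarith)
    omega
  · rw [hT β₁ hβ₁ β₂ hβ₂ β₃ hβ₃ (by omega),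
      hPρ x₁ (Or.inl hx₁) x₂ (Or.inl hx₂) x₃ (Or.inl hx₃) (by linarith)]
  · have := hPρ x₁ (Or.inl hx₁) x₂ (Or.inl hx₂) (x₃ + ρ) (mem_shift hx₃) (by linarith)
    omega

lemma covers_blockSum_of_covers (hP : P ⊆ Ico 0 ρ) {c w x₁ x₂ : ℤ} (hc : Covers T c)
    (hx₁ : x₁ ∈ P) (hx₂ : x₂ ∈ P) (h : 2 * x₂ = x₁ + w) : Covers (blockSum ρ T P) (ρ * c + w) := by
  obtain ⟨β₁, β₂, hβ₁, hβ₂, hβ, -, hsum⟩ := hc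
  refine covers_of_lt (mul_add_mem_blockSum hβ₁ hx₁) (mul_add_mem_blockSum hβ₂ hx₂)
    (mul_add_lt_mul_add (hP hx₁) (hP hx₂).1 hβ) ?_
  linear_combination ρ * hsum + h

lemma covers_blockSum_of_mem {c w : ℤ} (hc : c ∈ T) (hw : Covers P w) :
    Covers (blockSum ρ T P) (ρ * c + w) := by
  obtain ⟨x₁, x₂, hx₁, hx₂, hx, -, h⟩ := hw
  exact covers_of_lt (mul_add_mem_blockSum hc hx₁) (mul_add_mem_blockSum hc hx₂) (by omega)
    (by linear_combination h)

lemma covers_blockSum {M c₀ v : ℤ} (hM : 0 ≤ M) (hMρ : M < ρ) (hP : P ⊆ Icc 0 M)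
    (hT : ∀ c, c₀ ≤ c → c ∈ T ∨ Covers T c)
    (hPρ : ∀ w, 0 ≤ w → w < ρ → w ∈ P ∨ Covers P w ∨ Covers P (ρ + w))
    (hv : ρ * c₀ + M < v) (hvR : v ∉ blockSum ρ T P) : Covers (blockSum ρ T P) v := by
  have hρ : 0 < ρ := by omega
  have hPρ' : P ⊆ Ico 0 ρ := fun x hx => ⟨(hP hx).1, (hP hx).2.trans_lt hMρ⟩
  have lt_of_mul_lt : ∀ {c}, ρ * c₀ < ρ * c → c₀ < c := fun h => lt_of_mul_lt_mul_left h hρ.le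
  obtain ⟨c, w, hw0, hwρ, rfl⟩ : ∃ c w, 0 ≤ w ∧ w < ρ ∧ v = ρ * c + w :=
    ⟨v / ρ, v % ρ, Int.emod_nonneg v hρ.ne', Int.emod_lt_of_pos v hρ,
      (Int.mul_ediv_add_emod v ρ).symm⟩
  rcases hPρ w hw0 hwρ with hw | hw | hw
  · have hc : c₀ < c := lt_of_mul_lt (by linarith [(hP hw).2])
    rcases hT c hc.le with hcT | hcT
    · exact absurd (mul_add_mem_blockSum hcT hw) hvR
    · exact covers_blockSum_of_covers hPρ' hcT hw hw (by ring)
  · have hc : c₀ < c + 1 := lt_of_mul_lt (by linarith)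
    rcases hT c (by omega) with hcT | hcT
    · exact covers_blockSum_of_mem hcT hw
    · obtain ⟨x₁, x₂, hx₁, hx₂, -, -, h⟩ := hw
      exact covers_blockSum_of_covers hPρ' hcT hx₁ hx₂ h
  · obtain ⟨x₁, x₂, hx₁, hx₂, -, hx₂w, h⟩ := hw
    have hc : c₀ < c := lt_of_mul_lt (by linarith [(hP hx₁).1, (hP hx₂).2])
    rw [show ρ * c + w = ρ * (c - 1) + (ρ + w) by ring]
    rcases hT (c - 1) (by omega) with hcT | hcT
    · exact covers_blockSum_of_mem hcT ⟨x₁, x₂, hx₁, hx₂, by omega, hx₂w, h⟩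
    · exact covers_blockSum_of_covers hPρ' hcT hx₁ hx₂ h

end Blocks

namespace IsStanleySeq

variable {A : Finset ℤ} {a : ℕ → ℤ}

lemma strictMono (hA : IsStanleySeq A a) : StrictMono a := hA.2.2.2.1

lemma isLeast (hA : IsStanleySeq A a) {n : ℕ} (hn : A.card ≤ n) :
    IsLeast {m : ℤ | a (n - 1) < m ∧ ThreeFreeSet (a '' Iio n ∪ {m})} (a n) :=
  hA.2.2.2.2.2 n hn

lemma card_pos (hA : IsStanleySeq A a) : 0 < A.card := Finset.card_pos.2 ⟨0, hA.1⟩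

lemma image_range_card (hA : IsStanleySeq A a) : (Finset.range A.card).image a = A :=
  Finset.eq_of_subset_of_card_le
    (fun x hx => by
      obtain ⟨i, hi, rfl⟩ := Finset.mem_image.1 hx
      exact hA.2.2.2.2.1 i (Finset.mem_range.1 hi))
    (by rw [Finset.card_image_of_injective _ hA.strictMono.injective, Finset.card_range])

lemma apply_zero (hA : IsStanleySeq A a) : a 0 = 0 := by
  obtain ⟨i, -, hi⟩ := Finset.mem_image.1 (hA.image_range_card ▸ hA.1)
  have h0 : 0 ≤ a 0 := hA.2.1 _ (hA.2.2.2.2.1 0 hA.card_pos)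
  have := hA.strictMono.monotone (Nat.zero_le i)
  omega

lemma nonneg (hA : IsStanleySeq A a) (n : ℕ) : 0 ≤ a n :=
  hA.apply_zero ▸ hA.strictMono.monotone (Nat.zero_le n)

lemma le_apply (hA : IsStanleySeq A a) (n : ℕ) : (n : ℤ) ≤ a n := by
  induction n with
  | zero => simp [hA.apply_zero]
  | succ n ih =>
    have := hA.strictMono (Nat.lt_add_one n)
    push_cast
    omega

lemma threeFreeSet_range (hA : IsStanleySeq A a) : ThreeFreeSet (range a) := by
  rintro _ ⟨i, rfl⟩ _ ⟨j, rfl⟩ _ ⟨l, rfl⟩ hij hjl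
  have hij' := hA.strictMono.lt_iff_lt.1 hij
  have hjl' := hA.strictMono.lt_iff_lt.1 hjl
  rcases lt_or_ge l A.card with hl | hl
  · exact hA.2.2.1 _ (hA.2.2.2.2.1 i (by omega)) _ (hA.2.2.2.2.1 j (by omega)) _
      (hA.2.2.2.2.1 l hl) hij hjl
  · exact (hA.isLeast hl).1.2 _ (Or.inl ⟨i, hij'.trans hjl', rfl⟩) _ (Or.inl ⟨j, hjl', rfl⟩) _
      (Or.inr rfl) hij hjl

lemma covers_of_lt_of_lt (hA : IsStanleySeq A a) {n : ℕ} (hn : A.card ≤ n) {v : ℤ}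
    (h₁ : a (n - 1) < v) (h₂ : v < a n) : Covers (range a) v := by
  have hnot : ¬ThreeFreeSet (a '' Iio n ∪ {v}) := fun h =>
    (hA.isLeast hn).2 ⟨h₁, h⟩ |>.not_gt h₂
  refine (covers_of_not_threeFreeSet_union (hA.threeFreeSet_range.mono (image_subset_range _ _))
    ?_ hnot).of_forall_lt fun y hy _ => image_subset_range _ _ hy
  rintro _ ⟨i, hi, rfl⟩
  exact (hA.strictMono.monotone (Nat.le_sub_one_of_lt hi)).trans_lt h₁

lemma mem_or_covers (hA : IsStanleySeq A a) {c : ℤ} (hc : a (A.card - 1) ≤ c) :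
    c ∈ range a ∨ Covers (range a) c := by
  by_cases hcr : c ∈ range a
  · exact Or.inl hcr
  have hex : ∃ n, c < a n := ⟨c.toNat + 1, by
    have := hA.le_apply (c.toNat + 1)
    push_cast at this
    omega⟩
  have hn := Nat.find_spec hex
  have hn₀ : Nat.find hex ≠ 0 := fun h => by
    have := hA.strictMono.monotone (Nat.zero_le (A.card - 1))
    rw [h] at hn
    omega
  have hlt : a (Nat.find hex - 1) < c :=
    lt_of_le_of_ne (not_lt.1 (Nat.find_min hex (by omega))) fun h => hcr ⟨_, h⟩
  have hcard : A.card ≤ Nat.find hex := by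
    have := hA.strictMono.lt_iff_lt.1 (hc.trans_lt hn)
    omega
  exact Or.inr (hA.covers_of_lt_of_lt hcard hlt hn)

lemma eq (hA : IsStanleySeq A a) {a' : ℕ → ℤ} (hA' : IsStanleySeq A a') : a = a' := by
  funext n
  induction n using Nat.strong_induction_on with
  | _ n ih =>
  rcases lt_or_ge n A.card with hn | hn
  · have enum : ∀ {s : ℕ → ℤ}, IsStanleySeq A s →
        (fun i : Fin A.card => s i) = A.orderEmbOfFin rfl := fun hs =>
      Finset.orderEmbOfFin_unique rfl (fun i => hs.2.2.2.2.1 i i.2) fun _ _ hij => hs.strictMono hij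
    exact congrFun ((enum hA).trans (enum hA').symm) ⟨n, hn⟩
  · have h' := hA'.isLeast hn
    rw [← image_congr (s := Iio n) fun i hi => ih i hi,
      ← ih _ (by have := hA.card_pos; omega)] at h'
    exact (hA.isLeast hn).unique h'

lemma of_covers {s : ℕ → ℤ} {N : ℕ} (hN : 0 < N) (hs : StrictMono s) (h0 : s 0 = 0)
    (hfree : ThreeFreeSet (range s))
    (hgap : ∀ n, N ≤ n → ∀ v, s (n - 1) < v → v < s n → Covers (range s) v) :
    IsStanleySeq ((Finset.range N).image s) s := by
  have hcard : ((Finset.range N).image s).card = N := by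
    rw [Finset.card_image_of_injective _ hs.injective, Finset.card_range]
  refine ⟨Finset.mem_image.2 ⟨0, Finset.mem_range.2 hN, h0⟩, ?_, hfree.mono ?_, hs, ?_, ?_⟩
  · intro x hx
    obtain ⟨i, -, rfl⟩ := Finset.mem_image.1 hx
    exact h0 ▸ hs.monotone (Nat.zero_le i)
  · intro x hx
    obtain ⟨i, -, rfl⟩ := Finset.mem_image.1 (Finset.mem_coe.1 hx)
    exact mem_range_self i
  · intro i hi
    exact Finset.mem_image_of_mem s (Finset.mem_range.2 (hcard ▸ hi))
  · intro n hn
    rw [hcard] at hn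
    refine ⟨⟨hs (by omega), hfree.mono ?_⟩, fun m ⟨hm, hmfree⟩ => not_lt.1 fun hmn => ?_⟩
    · rintro _ (⟨i, -, rfl⟩ | rfl) <;> exact mem_range_self _
    · refine ((hgap n hn m hm hmn).of_forall_lt ?_).not_threeFreeSet (Or.inr rfl) hmfree
      rintro _ ⟨i, rfl⟩ hi
      exact Or.inl ⟨i, hs.lt_iff_lt.1 (hi.trans hmn), rfl⟩

end IsStanleySeq

lemma StrictMono.mem_image_Iio_iff {α β : Type*} [LinearOrder α] [Preorder β] {f : α → β}
    (hf : StrictMono f) {n : α} {x : β} : x ∈ f '' Iio n ↔ x ∈ range f ∧ x < f n := by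
  constructor
  · rintro ⟨i, hi, rfl⟩
    exact ⟨mem_range_self i, hf hi⟩
  · rintro ⟨⟨i, rfl⟩, hi⟩
    exact ⟨i, hf.lt_iff_lt.1 hi, rfl⟩

namespace IndepParams

variable {A : Finset ℤ} {a : ℕ → ℤ} {lam : ℤ} {k : ℕ}

lemma mono {κ : ℕ} (h : IndepParams a lam κ) (hk : κ ≤ k) : IndepParams a lam k :=
  fun j hj => h j (hk.trans hj)

lemma add_two_pow (h : IndepParams a lam k) {j i : ℕ} (hj : k ≤ j) (hi : i < 2 ^ j) :
    a (2 ^ j + i) = a (2 ^ j) + a i :=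
  (h j hj).1 i hi

lemma two_pow (h : IndepParams a lam k) {j : ℕ} (hj : k ≤ j) :
    a (2 ^ j) = 2 * a (2 ^ j - 1) + 1 - lam :=
  (h j hj).2

lemma two_pow_succ_sub_one (h : IndepParams a lam k) {j : ℕ} (hj : k ≤ j) :
    a (2 ^ (j + 1) - 1) = a (2 ^ j) + a (2 ^ j - 1) := by
  have := Nat.one_le_two_pow (n := j)
  rw [show 2 ^ (j + 1) - 1 = 2 ^ j + (2 ^ j - 1) by rw [pow_succ]; omega]
  exact h.add_two_pow hj (by omega)

lemma two_pow_succ (h : IndepParams a lam k) {j : ℕ} (hj : k ≤ j) :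
    a (2 ^ (j + 1)) = 3 * a (2 ^ j) := by
  have h₁ := h.two_pow (hj.trans j.le_succ)
  have h₂ := h.two_pow_succ_sub_one hj
  have h₃ := h.two_pow hj
  linarith

lemma exists_eq_two_pow_add (h : IndepParams a lam k) (hA : IsStanleySeq A a) {j : ℕ}
    (hj : k ≤ j) {z : ℤ} (hz : z ∈ range a) (h₁ : a (2 ^ j) ≤ z) (h₂ : z < 3 * a (2 ^ j)) :
    ∃ x ∈ a '' Iio (2 ^ j), z = a (2 ^ j) + x := by
  obtain ⟨t, rfl⟩ := hz
  have ht₁ : 2 ^ j ≤ t := hA.strictMono.le_iff_le.1 h₁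
  have ht₂ : t < 2 ^ (j + 1) := hA.strictMono.lt_iff_lt.1 (h.two_pow_succ hj ▸ h₂)
  rw [pow_succ] at ht₂
  obtain ⟨i, rfl⟩ := Nat.exists_eq_add_of_le ht₁
  exact ⟨a i, ⟨i, by simp only [mem_Iio]; omega, rfl⟩, h.add_two_pow hj (by omega)⟩

lemma covers_two_pow_add_of_card_le (h : IndepParams a lam k) (hA : IsStanleySeq A a) {w : ℤ}
    (hw : 0 ≤ w) (hwa : w ∉ range a) (hwc : ¬Covers (range a) w) (hcard : A.card ≤ 2 ^ k)
    (hwM : w + lam ≤ a (2 ^ k - 1)) :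
    Covers (a '' Iio (2 ^ k)) (a (2 ^ k) + w) := by
  have hρ := h.two_pow le_rfl
  have hMρ : a (2 ^ k - 1) < a (2 ^ k) := hA.strictMono (Nat.sub_lt Nat.one_le_two_pow one_pos)
  have hM0 := hA.nonneg (2 ^ k - 1)
  have hcover : Covers (range a) (a (2 ^ k) + w) := by
    refine (hA.mem_or_covers ?_).resolve_left fun hmem => ?_
    · linarith [hA.strictMono.monotone (show A.card - 1 ≤ 2 ^ k by omega)]
    · obtain ⟨_, ⟨i, -, rfl⟩, hi⟩ := h.exists_eq_two_pow_add hA le_rfl hmem (by omega) (by omega)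
      exact hwa ⟨i, by omega⟩
  obtain ⟨y, z, hy, hz, hyz, -, hsum⟩ := hcover
  rcases lt_or_ge z (a (2 ^ k)) with hzρ | hzρ
  · exact covers_of_lt (hA.strictMono.mem_image_Iio_iff.2 ⟨hy, hyz.trans hzρ⟩)
      (hA.strictMono.mem_image_Iio_iff.2 ⟨hz, hzρ⟩) hyz hsum
  obtain ⟨_, ⟨j, -, rfl⟩, rfl⟩ := h.exists_eq_two_pow_add hA le_rfl hz hzρ (by omega)
  rcases lt_or_ge y (a (2 ^ k)) with hyρ | hyρ
  · -- then `y ≤ a (2 ^ k - 1)`, too small to reach `a (2 ^ k) + w` from `a (2 ^ k) + a j`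
    obtain ⟨t, rfl⟩ := hy
    have := hA.strictMono.monotone (Nat.le_sub_one_of_lt (hA.strictMono.lt_iff_lt.1 hyρ))
    have := hA.nonneg j
    omega
  obtain ⟨_, ⟨i, -, rfl⟩, rfl⟩ := h.exists_eq_two_pow_add hA le_rfl hy hyρ (by omega)
  exact (hwc (covers_of_lt ⟨i, rfl⟩ ⟨j, rfl⟩ (by omega) (by omega))).elim

lemma covers_two_pow_add_of_succ (h : IndepParams a lam k) (hA : IsStanleySeq A a) {j : ℕ}
    (hj : k ≤ j) {w : ℤ} (hw : 0 ≤ w)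
    (hcov : Covers (a '' Iio (2 ^ (j + 1))) (a (2 ^ (j + 1)) + w)) :
    Covers (a '' Iio (2 ^ j)) (a (2 ^ j) + w) := by
  obtain ⟨y, z, hy, hz, -, -, hsum⟩ := hcov
  rw [hA.strictMono.mem_image_Iio_iff, h.two_pow_succ hj] at hy hz
  rw [h.two_pow_succ hj] at hsum
  obtain ⟨⟨t, rfl⟩, -⟩ := hy
  have := hA.nonneg t
  obtain ⟨_, ⟨i, hi, rfl⟩, rfl⟩ := h.exists_eq_two_pow_add hA hj hz.1 (by omega) hz.2
  have := hA.strictMono hi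
  exact covers_of_lt (hA.strictMono.mem_image_Iio_iff.2 ⟨mem_range_self t, by omega⟩)
    (mem_image_of_mem a hi) (by omega) (by omega)

lemma covers_two_pow_add (h : IndepParams a lam k) (hA : IsStanleySeq A a) {w : ℤ}
    (hw : 0 ≤ w) (hwa : w ∉ range a) (hwc : ¬Covers (range a) w) :
    Covers (a '' Iio (2 ^ k)) (a (2 ^ k) + w) := by
  -- `2 ^ K ≥ |A|` puts `a (2 ^ K) + w` past the initial segment; `K ≥ w + λ` gives `hwM` at `K`
  set K := k + A.card + (w + lam).toNat
  have hK : K < 2 ^ K := Nat.lt_two_pow_self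
  have hbase : Covers (a '' Iio (2 ^ K)) (a (2 ^ K) + w) := by
    refine (h.mono (by omega)).covers_two_pow_add_of_card_le hA hw hwa hwc (by omega) ?_
    have := hA.le_apply (2 ^ K - 1)
    have : ((K : ℕ) : ℤ) ≤ ((2 ^ K - 1 : ℕ) : ℤ) := by exact_mod_cast Nat.le_sub_one_of_lt hK
    have : (w + lam) ≤ ((K : ℕ) : ℤ) := by simp only [K]; push_cast; omega
    omega
  exact Nat.decreasingInduction
    (motive := fun j _ => k ≤ j → Covers (a '' Iio (2 ^ j)) (a (2 ^ j) + w))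
    (fun j _ ih hj => h.covers_two_pow_add_of_succ hA hj hw (ih (by omega)))
    (fun _ => hbase) (by omega : k ≤ K) le_rfl

lemma mem_or_covers_or_covers_two_pow_add (h : IndepParams a lam k) (hA : IsStanleySeq A a)
    {w : ℤ} (hw : 0 ≤ w) (hwρ : w < a (2 ^ k)) :
    w ∈ a '' Iio (2 ^ k) ∨ Covers (a '' Iio (2 ^ k)) w ∨
      Covers (a '' Iio (2 ^ k)) (a (2 ^ k) + w) := by
  by_cases hwa : w ∈ range a
  · exact Or.inl (hA.strictMono.mem_image_Iio_iff.2 ⟨hwa, hwρ⟩)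
  by_cases hwc : Covers (range a) w
  · exact Or.inr <| Or.inl <| hwc.of_forall_lt fun y hy hyw =>
      hA.strictMono.mem_image_Iio_iff.2 ⟨hy, hyw.trans hwρ⟩
  exact Or.inr <| Or.inr <| h.covers_two_pow_add hA hw hwa hwc

end IndepParams

/-- The paper's `S(A ⊗_k B)`. -/
def prodSeq (a b : ℕ → ℤ) (k n : ℕ) : ℤ := a (2 ^ k) * b (n / 2 ^ k) + a (n % 2 ^ k)

section ProdSeq

variable {A B : Finset ℤ} {a b : ℕ → ℤ} {k : ℕ}

lemma prodSeq_mul_add (a b : ℕ → ℤ) (k : ℕ) {q r : ℕ} (hr : r < 2 ^ k) :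
    prodSeq a b k (2 ^ k * q + r) = a (2 ^ k) * b q + a r := by
  rw [prodSeq, Nat.mul_add_div (Nat.two_pow_pos k), Nat.div_eq_of_lt hr, add_zero,
    Nat.mul_add_mod, Nat.mod_eq_of_lt hr]

lemma range_prodSeq :
    range (prodSeq a b k) = blockSum (a (2 ^ k)) (range b) (a '' Iio (2 ^ k)) := by
  ext v
  constructor
  · rintro ⟨n, rfl⟩
    exact mul_add_mem_blockSum (mem_range_self _)
      (mem_image_of_mem a (Nat.mod_lt _ (Nat.two_pow_pos k)))
  · rintro ⟨_, ⟨m, rfl⟩, _, ⟨i, hi, rfl⟩, rfl⟩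
    exact ⟨2 ^ k * m + i, prodSeq_mul_add a b k hi⟩

lemma prodSeq_strictMono (hA : IsStanleySeq A a) (hB : IsStanleySeq B b) :
    StrictMono (prodSeq a b k) := by
  intro n m hnm
  have hd := Nat.two_pow_pos k
  have hr : n % 2 ^ k < 2 ^ k := Nat.mod_lt _ hd
  rcases (Nat.div_le_div_right (c := 2 ^ k) hnm.le).lt_or_eq with hq | hq
  · exact mul_add_lt_mul_add ⟨hA.nonneg _, hA.strictMono hr⟩ (hA.nonneg _) (hB.strictMono hq)
  · have hn := Nat.div_add_mod n (2 ^ k)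
    have hm := Nat.div_add_mod m (2 ^ k)
    rw [hq] at hn
    have := hA.strictMono (show n % 2 ^ k < m % 2 ^ k by omega)
    simp only [prodSeq, hq]
    omega

lemma image_prodSeq (hB : IsStanleySeq B b) :
    (Finset.range (2 ^ k * B.card)).image (prodSeq a b k) =
      (Finset.range (2 ^ k) ×ˢ B).image fun p => a (2 ^ k) * p.2 + a p.1 := by
  ext x
  simp only [Finset.mem_image, Finset.mem_range, Finset.mem_product, Prod.exists]
  constructor
  · rintro ⟨n, hn, rfl⟩
    exact ⟨n % 2 ^ k, b (n / 2 ^ k), ⟨Nat.mod_lt _ (Nat.two_pow_pos k),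
      hB.2.2.2.2.1 _ (Nat.div_lt_of_lt_mul hn)⟩, rfl⟩
  · rintro ⟨i, _, ⟨hi, hβ⟩, rfl⟩
    obtain ⟨m, hm, rfl⟩ := Finset.mem_image.1 (hB.image_range_card ▸ hβ)
    refine ⟨2 ^ k * m + i, ?_, prodSeq_mul_add a b k hi⟩
    calc 2 ^ k * m + i < 2 ^ k * (m + 1) := by rw [mul_add_one]; omega
      _ ≤ 2 ^ k * B.card := Nat.mul_le_mul_left _ (Finset.mem_range.1 hm)

lemma isStanleySeq_prodSeq {lam : ℤ} (h : IndepParams a lam k) (hA : IsStanleySeq A a)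
    (hB : IsStanleySeq B b) :
    IsStanleySeq ((Finset.range (2 ^ k) ×ˢ B).image fun p => a (2 ^ k) * p.2 + a p.1)
      (prodSeq a b k) := by
  rw [← image_prodSeq hB]
  have hd := Nat.two_pow_pos k
  have hMρ : a (2 ^ k - 1) < a (2 ^ k) := hA.strictMono (by omega)
  have hP : a '' Iio (2 ^ k) ⊆ Icc 0 (a (2 ^ k - 1)) := by
    rintro _ ⟨i, hi, rfl⟩
    exact ⟨hA.nonneg i, hA.strictMono.monotone (Nat.le_sub_one_of_lt hi)⟩
  refine IsStanleySeq.of_covers (Nat.mul_pos hd hB.card_pos) (prodSeq_strictMono hA hB)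
    (by simp [prodSeq, hA.apply_zero, hB.apply_zero]) ?_ fun n hn v h₁ h₂ => ?_
  · rw [range_prodSeq]
    refine threeFreeSet_blockSum (hP.trans (Icc_subset_Ico_right hMρ))
      (hA.threeFreeSet_range.mono ?_) hB.threeFreeSet_range
    rintro _ (⟨i, -, rfl⟩ | ⟨_, ⟨i, hi, rfl⟩, rfl⟩)
    · exact mem_range_self i
    · exact ⟨2 ^ k + i, (h.add_two_pow le_rfl hi).trans (add_comm _ _)⟩
  · have hv : a (2 ^ k) * b (B.card - 1) + a (2 ^ k - 1) < v := by
      have hlast : 2 ^ k * B.card - 1 = 2 ^ k * (B.card - 1) + (2 ^ k - 1) := by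
        have := hB.card_pos
        rw [Nat.mul_sub_one]
        have := Nat.le_mul_of_pos_right (2 ^ k) this
        omega
      have := (prodSeq_strictMono (k := k) hA hB).monotone
        (show 2 ^ k * B.card - 1 ≤ n - 1 by omega)
      rw [hlast, prodSeq_mul_add a b k (by omega)] at this
      omega
    have hvR : v ∉ range (prodSeq a b k) := by
      rintro ⟨t, rfl⟩
      have := (prodSeq_strictMono hA hB).lt_iff_lt.1 h₁
      have := (prodSeq_strictMono hA hB).lt_iff_lt.1 h₂
      omega
    rw [range_prodSeq] at hvR ⊢
    exact covers_blockSum (hA.nonneg _) hMρ hP (fun c hc => hB.mem_or_covers hc)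
      (fun w hw hwρ => h.mem_or_covers_or_covers_two_pow_add hA hw hwρ) hv hvR

lemma indepParams_prodSeq {lamA lamB : ℤ} {κ : ℕ} (hA : IsStanleySeq A a)
    (hIA : IndepParams a lamA k) (hIB : IndepParams b lamB κ) :
    IndepParams (prodSeq a b k) (lamA + a (2 ^ k) * lamB) (k + κ) := by
  intro j hj
  obtain ⟨e, rfl⟩ := Nat.exists_eq_add_of_le (show k ≤ j by omega)
  have hd := Nat.two_pow_pos k
  have hpow : 2 ^ (k + e) = 2 ^ k * 2 ^ e := pow_add 2 k e
  have htop : prodSeq a b k (2 ^ (k + e)) = a (2 ^ k) * b (2 ^ e) := by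
    rw [hpow, ← add_zero (2 ^ k * 2 ^ e), prodSeq_mul_add a b k hd, hA.apply_zero, add_zero]
  refine ⟨fun i hi => ?_, ?_⟩
  · obtain ⟨q, r, hr, rfl⟩ : ∃ q r, r < 2 ^ k ∧ i = 2 ^ k * q + r :=
      ⟨i / 2 ^ k, i % 2 ^ k, Nat.mod_lt _ hd, (Nat.div_add_mod i _).symm⟩
    have hq : q < 2 ^ e := Nat.lt_of_mul_lt_mul_left (a := 2 ^ k) (by rw [← hpow]; omega)
    rw [htop, hpow, show 2 ^ k * 2 ^ e + (2 ^ k * q + r) = 2 ^ k * (2 ^ e + q) + r by ring,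
      prodSeq_mul_add a b k hr, prodSeq_mul_add a b k hr, hIB.add_two_pow (by omega) hq]
    ring
  · have hlast : 2 ^ k * 2 ^ e - 1 = 2 ^ k * (2 ^ e - 1) + (2 ^ k - 1) := by
      rw [Nat.mul_sub_one]
      have := Nat.le_mul_of_pos_right (2 ^ k) (Nat.two_pow_pos e)
      omega
    rw [htop, hpow, hlast, prodSeq_mul_add a b k (by omega)]
    linear_combination a (2 ^ k) * hIB.two_pow (show κ ≤ e by omega) + hIA.two_pow le_rfl

end ProdSeq

/-- Proposition 3.4: if S(A) and S(B) are independent and k ≥ κ(A),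
then with A* = {a_0,...,a_{2^k−1}} and A ⊗_k B = {a_{2^k}·b + a : a ∈ A*, b ∈ B},
the sequence S(A ⊗_k B) is independent and its set of terms is
{a_{2^k}·b + a : a ∈ A*, b ∈ S(B)}. -/
theorem product_construction (A B : Finset ℤ) (a b : ℕ → ℤ)
    (hA : IsStanleySeq A a) (hB : IsStanleySeq B b)
    (hIndA : Independent a) (hIndB : Independent b)
    (k : ℕ) (hk : kappa a ≤ k)
    (AB : Finset ℤ)
    (hAB : AB = (Finset.range (2 ^ k) ×ˢ B).image fun p => a (2 ^ k) * p.2 + a p.1) :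
    (∃ ab : ℕ → ℤ, IsStanleySeq AB ab) ∧
    ∀ ab : ℕ → ℤ, IsStanleySeq AB ab →
      Independent ab ∧
      Set.range ab = {v : ℤ | ∃ i < 2 ^ k, ∃ m : ℕ, v = a (2 ^ k) * b m + a i} := by
  obtain ⟨lamA, hIA⟩ : ∃ lam, IndepParams a lam (kappa a) := by
    obtain ⟨lam, κ, h⟩ := hIndA
    exact Nat.sInf_mem (s := {κ | ∃ lam, IndepParams a lam κ}) ⟨κ, lam, h⟩
  obtain ⟨lamB, κB, hIB⟩ := hIndB
  have hprod : IsStanleySeq AB (prodSeq a b k) := hAB ▸ isStanleySeq_prodSeq (hIA.mono hk) hA hB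
  refine ⟨⟨_, hprod⟩, fun ab hab => ?_⟩
  obtain rfl := hab.eq hprod
  refine ⟨⟨_, _, indepParams_prodSeq hA (hIA.mono hk) hIB⟩, ?_⟩
  ext v
  rw [range_prodSeq]
  constructor
  · rintro ⟨_, ⟨m, rfl⟩, _, ⟨i, hi, rfl⟩, rfl⟩
    exact ⟨i, hi, m, rfl⟩
  · rintro ⟨i, hi, m, rfl⟩
    exact mul_add_mem_blockSum (mem_range_self m) (mem_image_of_mem a hi)
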